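/- For every λ ≡ 0 (mod 6) and every v ≥ 3, there exists a 2-(v,3,λ) triple system admitting a zero-sum 3-flow. -/

import Mathlib

/-! For odd `v`, the progressions `{i, i + d, i + 2d}` in `ZMod v` with `d ≠ 0` are the triples
`{a, c, (a + c) / 2}` of an idempotent Latin square, and they form a TS(v, 6): two distinct
points fill two of the three positions of a progression in `3 · 2` ways, and each choice of
positions determines the progression. For fixed `d` the `v` progressions cover every point
exactly three times, so weights depending only on `d` and summing to zero (alternating signs,
with one `-2` when their number is odd) give a zero-sum flow.

For even `v = u + 1` we drop the progressions `{i, i + 1, i + 2}` and, for each of them, add the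
three triples obtained by replacing one of its points by a new point `∞`. These cover the dropped
pairs exactly once and every pair `{∞, a}` six times. For a fixed replaced position, the number
of these triples through a point depends only on the point (`u` for `∞`, `2` otherwise), so
zero-sum weights on the three positions keep the flow zero-sum. The case `v = 4` is checked
directly, and `λ = 6k` is reached by repeating every block `k` times.
-/

open Finset

section Designs

variable {P Q I J : Type*} [DecidableEq P] [DecidableEq Q] [Fintype I] [Fintype J]

def IsTripleSystem (B : I → Finset P) (lam : ℕ) : Prop :=
  (∀ i, #(B i) = 3) ∧ ∀ x y, x ≠ y → #{i | x ∈ B i ∧ y ∈ B i} = lam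

def IsZeroSumFlow (B : I → Finset P) (f : I → ℤ) : Prop :=
  (∀ i, f i ≠ 0 ∧ |f i| ≤ 2) ∧ ∀ x, ∑ i with x ∈ B i, f i = 0

variable (P) in
def HasZeroSumFlowTS (lam : ℕ) : Prop :=
  ∃ (I : Type) (_ : Fintype I) (B : I → Finset P) (f : I → ℤ),
    IsTripleSystem B lam ∧ IsZeroSumFlow B f

theorem sum_filter_prod {M : Type*} [AddCommMonoid M] (R : J → I → Prop)
    [∀ j i, Decidable (R j i)] (g : J × I → M) :
    ∑ p : J × I with R p.1 p.2, g p = ∑ j, ∑ i with R j i, g (j, i) := by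
  simp only [sum_filter, Fintype.sum_prod_type]

theorem card_filter_prod (R : J → I → Prop) [∀ j i, Decidable (R j i)] :
    #{p : J × I | R p.1 p.2} = ∑ j, #{i | R j i} := by
  rw [card_filter, Fintype.sum_prod_type]
  simp only [card_filter]

theorem sum_filter_prod_fst (B : J → I → Finset P) (w : J → ℤ) (x : P) :
    ∑ p : J × I with x ∈ B p.1 p.2, w p.1 = ∑ j, #{i | x ∈ B j i} * w j := by
  rw [sum_filter_prod (fun j i => x ∈ B j i)]
  simp only [sum_const, nsmul_eq_mul]

theorem exists_zero_sum_weights (h : 2 ≤ Fintype.card J) :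
    ∃ w : J → ℤ, (∀ j, w j ≠ 0 ∧ |w j| ≤ 2) ∧ ∑ j, w j = 0 := by
  set n := Fintype.card J
  set s : ℤ := ∑ k ∈ range n, (-1) ^ k
  have hs : s = 0 ∨ s = 1 := by
    rw [show s = _ from neg_one_geom_sum]; split_ifs <;> simp
  -- alternating signs, with the surplus `s` of an odd count absorbed at index `1`
  let g : ℕ → ℤ := fun k => (-1) ^ k - if k = 1 then s else 0
  refine ⟨fun j => g (Fintype.equivFin J j), fun j => ?_, ?_⟩
  · simp only [g]
    split_ifs with h1
    · rw [h1]; rcases hs with hs | hs <;> simp [hs]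
    · rcases neg_one_pow_eq_or ℤ (Fintype.equivFin J j : ℕ) with h1 | h1 <;> simp [h1]
  · rw [Equiv.sum_comp (Fintype.equivFin J) (fun k : Fin n => g k), Fin.sum_univ_eq_sum_range g,
      sum_sub_distrib, sum_ite_eq' _ _ (fun _ => s), if_pos (mem_range.2 h), sub_self]

theorem IsTripleSystem.comp_equiv {I' : Type*} [Fintype I'] {B : I → Finset P} {lam : ℕ}
    (hB : IsTripleSystem B lam) (e : I' ≃ I) : IsTripleSystem (B ∘ e) lam := by
  refine ⟨fun i => hB.1 (e i), fun x y hxy => ?_⟩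
  rw [← hB.2 x y hxy, card_filter, card_filter]
  exact Equiv.sum_comp e (fun i => if x ∈ B i ∧ y ∈ B i then 1 else 0)

theorem IsZeroSumFlow.comp_equiv {I' : Type*} [Fintype I'] {B : I → Finset P} {f : I → ℤ}
    (hf : IsZeroSumFlow B f) (e : I' ≃ I) : IsZeroSumFlow (B ∘ e) (f ∘ e) := by
  refine ⟨fun i => hf.1 (e i), fun x => ?_⟩
  rw [← hf.2 x, sum_filter, sum_filter]
  exact Equiv.sum_comp e (fun i => if x ∈ B i then f i else 0)

theorem IsTripleSystem.map_equiv {B : I → Finset P} {lam : ℕ} (hB : IsTripleSystem B lam)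
    (e : P ≃ Q) : IsTripleSystem (fun i => (B i).map e.toEmbedding) lam := by
  refine ⟨fun i => by rw [card_map, hB.1], fun x y hxy => ?_⟩
  simp only [mem_map_equiv]
  exact hB.2 _ _ (e.symm.injective.ne hxy)

theorem IsZeroSumFlow.map_equiv {B : I → Finset P} {f : I → ℤ} (hf : IsZeroSumFlow B f)
    (e : P ≃ Q) : IsZeroSumFlow (fun i => (B i).map e.toEmbedding) f := by
  refine ⟨hf.1, fun x => ?_⟩
  simp only [mem_map_equiv]
  exact hf.2 _

theorem IsTripleSystem.replicate {B : I → Finset P} {lam : ℕ} (hB : IsTripleSystem B lam)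
    (k : ℕ) : IsTripleSystem (fun p : Fin k × I => B p.2) (lam * k) := by
  refine ⟨fun p => hB.1 p.2, fun x y hxy => ?_⟩
  rw [card_filter_prod (fun (_ : Fin k) i => x ∈ B i ∧ y ∈ B i)]
  simp [hB.2 x y hxy, mul_comm]

theorem IsZeroSumFlow.replicate {B : I → Finset P} {f : I → ℤ} (hf : IsZeroSumFlow B f)
    (k : ℕ) : IsZeroSumFlow (fun p : Fin k × I => B p.2) (fun p => f p.2) := by
  refine ⟨fun p => hf.1 p.2, fun x => ?_⟩
  rw [sum_filter_prod (fun (_ : Fin k) i => x ∈ B i)]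
  simp [hf.2 x]

namespace HasZeroSumFlowTS

theorem congr {lam : ℕ} (h : HasZeroSumFlowTS P lam) (e : P ≃ Q) : HasZeroSumFlowTS Q lam :=
  let ⟨_, _, _, _, hB, hf⟩ := h
  ⟨_, _, _, _, hB.map_equiv e, hf.map_equiv e⟩

theorem mul {lam : ℕ} (h : HasZeroSumFlowTS P lam) (k : ℕ) : HasZeroSumFlowTS P (lam * k) :=
  let ⟨_, _, _, _, hB, hf⟩ := h
  ⟨_, _, _, _, hB.replicate k, hf.replicate k⟩

theorem exists_fin {v lam : ℕ} (h : HasZeroSumFlowTS (Fin v) lam) :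
    ∃ (b : ℕ) (B : Fin b → Finset (Fin v)), IsTripleSystem B lam ∧
      ∃ f : Fin b → ℤ, IsZeroSumFlow B f :=
  let ⟨I, _, _, _, hB, hf⟩ := h
  let e := (Fintype.equivFin I).symm
  ⟨_, _, hB.comp_equiv e, _, hf.comp_equiv e⟩

end HasZeroSumFlowTS

end Designs

section ArithmeticProgression

variable {R : Type*} [CommRing R] {k : ℕ}

def apTerm (d i : R) (p : Fin k) : R := i + (p : ℕ) * d

theorem apTerm_sub_apTerm (d i : R) (p q : Fin k) :
    apTerm d i q - apTerm d i p = (((q : ℕ) : R) - (p : ℕ)) * d := by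
  simp only [apTerm]; ring

theorem isUnit_natCast_sub_natCast (hR : ∀ m : ℕ, 0 < m → m < k → IsUnit (m : R))
    {p q : Fin k} (h : p ≠ q) : IsUnit (((q : ℕ) : R) - (p : ℕ)) := by
  rcases lt_or_gt_of_ne (Fin.val_ne_of_ne h) with hpq | hpq
  · rw [← Nat.cast_sub hpq.le]
    exact hR _ (by omega) (by omega)
  · rw [← neg_sub, ← Nat.cast_sub hpq.le]
    exact (hR _ (by omega) (by omega)).neg

theorem apTerm_injective (hR : ∀ m : ℕ, 0 < m → m < k → IsUnit (m : R)) {d : R} (hd : d ≠ 0)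
    (i : R) : Function.Injective (apTerm (k := k) d i) := by
  intro p q hpq
  by_contra h
  have := apTerm_sub_apTerm d i p q
  rw [hpq, sub_self, eq_comm] at this
  exact hd ((isUnit_natCast_sub_natCast hR h).mul_right_eq_zero.1 this)

variable [DecidableEq R]

def ap (k : ℕ) (d i : R) : Finset R := univ.image (apTerm (k := k) d i)

theorem card_image_apTerm (hR : ∀ m : ℕ, 0 < m → m < k → IsUnit (m : R)) {d : R} (hd : d ≠ 0)
    (i : R) (S : Finset (Fin k)) : #(S.image (apTerm d i)) = #S :=
  card_image_of_injective S (apTerm_injective hR hd i)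

theorem card_ap (hR : ∀ m : ℕ, 0 < m → m < k → IsUnit (m : R)) {d : R} (hd : d ≠ 0) (i : R) :
    #(ap k d i) = k := by
  rw [ap, card_image_apTerm hR hd, card_univ, Fintype.card_fin]

variable [Fintype R]

theorem card_filter_pair_mem_ap_zero {x y : R} (hxy : x ≠ y) :
    #{i | x ∈ ap k 0 i ∧ y ∈ ap k 0 i} = 0 := by
  simp only [card_eq_zero, filter_eq_empty_iff, ap, apTerm, mem_image, mul_zero, add_zero]
  rintro i - ⟨⟨_, -, rfl⟩, ⟨_, -, rfl⟩⟩
  exact hxy rfl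

theorem card_filter_mem_image_apTerm (hR : ∀ m : ℕ, 0 < m → m < k → IsUnit (m : R)) {d : R}
    (hd : d ≠ 0) (S : Finset (Fin k)) (x : R) : #{i | x ∈ S.image (apTerm d i)} = #S := by
  have : ({i | x ∈ S.image (apTerm d i)} : Finset R) = S.image (apTerm (-d) x) := by
    ext i
    simp only [mem_filter, mem_univ, true_and, mem_image, apTerm]
    refine exists_congr fun p => and_congr_right fun _ => ?_
    constructor <;> intro h <;> linear_combination -h
  rw [this, card_image_apTerm hR (neg_ne_zero.2 hd)]

theorem card_filter_mem_ap (hR : ∀ m : ℕ, 0 < m → m < k → IsUnit (m : R)) {d : R} (hd : d ≠ 0)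
    (x : R) : #{i | x ∈ ap k d i} = k := by
  have := card_filter_mem_image_apTerm hR hd univ x
  rwa [card_univ, Fintype.card_fin] at this

theorem card_filter_pair_mem_ap (hR : ∀ m : ℕ, 0 < m → m < k → IsUnit (m : R)) {x y : R}
    (hxy : x ≠ y) : #{q : R × R | x ∈ ap k q.1 q.2 ∧ y ∈ ap k q.1 q.2} = k * (k - 1) := by
  have hoff : #(univ : Finset (Fin k)).offDiag = k * (k - 1) := by
    rw [offDiag_card, card_univ, Fintype.card_fin, Nat.mul_sub_one]
  rw [← hoff]
  symm
  -- the positions `p ≠ q` of `x` and `y` determine the progression: `(q - p) d = y - x`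
  let diff : Fin k × Fin k → R := fun pq =>
    Ring.inverse (((pq.2 : ℕ) : R) - (pq.1 : ℕ)) * (y - x)
  have hdiff : ∀ pq : Fin k × Fin k, pq.1 ≠ pq.2 →
      (((pq.2 : ℕ) : R) - (pq.1 : ℕ)) * diff pq = y - x :=
    fun pq h => Ring.mul_inverse_cancel_left _ _ (isUnit_natCast_sub_natCast hR h)
  have hdiff0 : ∀ pq : Fin k × Fin k, pq.1 ≠ pq.2 → diff pq ≠ 0 := fun pq h h0 => by
    have := hdiff pq h
    rw [h0, mul_zero] at this
    exact hxy (sub_eq_zero.1 this.symm).symm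
  refine card_bij (fun pq _ => (diff pq, x - (pq.1 : ℕ) * diff pq)) ?_ ?_ ?_
  · rintro pq hpq
    have hne := (mem_offDiag.1 hpq).2.2
    simp only [mem_filter, mem_univ, true_and, ap, mem_image, apTerm]
    exact ⟨⟨pq.1, by ring⟩, ⟨pq.2, by linear_combination hdiff pq hne⟩⟩
  · rintro ⟨p, q⟩ hpq ⟨p', q'⟩ hpq' h
    obtain ⟨hd, hi⟩ := Prod.mk.inj h
    have hne := (mem_offDiag.1 hpq).2.2
    have inj := apTerm_injective hR (hdiff0 _ hne) 0
    obtain rfl : p = p' := inj (by simp only [apTerm]; linear_combination -hi - ((p' : ℕ) : R) * hd)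
    obtain rfl : q = q' := inj (by
      simp only [apTerm]
      linear_combination hdiff _ hne - hdiff _ (mem_offDiag.1 hpq').2.2 +
        ((p : ℕ) - (q' : ℕ) : R) * hd)
    rfl
  · rintro ⟨d, i⟩ hdi
    simp only [mem_filter, mem_univ, true_and, ap, mem_image] at hdi
    obtain ⟨⟨p, rfl⟩, ⟨q, rfl⟩⟩ := hdi
    have hne : p ≠ q := by rintro rfl; exact hxy rfl
    have hd : diff (p, q) = d := by
      show Ring.inverse _ * (apTerm d i q - apTerm d i p) = d
      rw [apTerm_sub_apTerm]
      exact Ring.inverse_mul_cancel_left _ _ (isUnit_natCast_sub_natCast hR hne)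
    refine ⟨(p, q), mem_offDiag.2 ⟨mem_univ _, mem_univ _, hne⟩, ?_⟩
    rw [hd]
    simp only [apTerm, add_sub_cancel_right]

end ArithmeticProgression

theorem isUnit_natCast_of_lt_three {R : Type*} [CommRing R] (h2 : IsUnit (2 : R)) (m : ℕ)
    (hm : 0 < m) (hm3 : m < 3) : IsUnit (m : R) := by
  interval_cases m <;> simp [h2]

theorem hasZeroSumFlowTS_of_isUnit_two {R : Type} [CommRing R] [Fintype R] [DecidableEq R]
    [Nontrivial R] (h2 : IsUnit (2 : R)) : HasZeroSumFlowTS R 6 := by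
  have hR := isUnit_natCast_of_lt_three h2
  have hJ : 2 ≤ Fintype.card (univ.erase (0 : R)) := by
    rw [Fintype.card_coe]
    exact one_lt_card.2 ⟨1, mem_erase.2 ⟨one_ne_zero, mem_univ _⟩, 2,
      mem_erase.2 ⟨h2.ne_zero, mem_univ _⟩, fun h => one_ne_zero (by linear_combination -h)⟩
  obtain ⟨w, hw, hsum⟩ := exists_zero_sum_weights hJ
  refine ⟨univ.erase (0 : R) × R, inferInstance, fun p => ap 3 p.1 p.2, fun p => w p.1,
    ⟨fun p => ?_, fun x y hxy => ?_⟩, fun p => hw p.1, fun x => ?_⟩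
  · exact card_ap hR (ne_of_mem_erase p.1.2) _
  · set c : R → ℕ := fun d => #{i | x ∈ ap 3 d i ∧ y ∈ ap 3 d i}
    rw [card_filter_prod (fun (d : univ.erase (0 : R)) i => x ∈ ap 3 d.1 i ∧ y ∈ ap 3 d.1 i),
      sum_coe_sort (univ.erase 0) c, sum_erase univ (show c 0 = 0 from
        card_filter_pair_mem_ap_zero hxy), ← card_filter_prod, card_filter_pair_mem_ap hR hxy]
  · rw [sum_filter_prod_fst (fun (d : univ.erase (0 : R)) i => ap 3 d.1 i) w x]
    simp only [card_filter_mem_ap hR (ne_of_mem_erase (Subtype.prop _)), ← mul_sum, hsum,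
      mul_zero]

theorem card_filter_pair_mem_image_erase {α : Type*} [DecidableEq α] {t : Fin 3 → α}
    (ht : Function.Injective t) {a b : α} (hab : a ≠ b) :
    #{m | a ∈ (univ.erase m).image t ∧ b ∈ (univ.erase m).image t} =
      if a ∈ univ.image t ∧ b ∈ univ.image t then 1 else 0 := by
  split_ifs with h
  · obtain ⟨⟨p, -, rfl⟩, ⟨q, -, rfl⟩⟩ := And.imp mem_image.1 mem_image.1 h
    simp only [mem_image, mem_erase, mem_univ, and_true, ht.eq_iff, exists_eq_right]
    have hthird : ∀ p q : Fin 3, p ≠ q → #{m | p ≠ m ∧ q ≠ m} = 1 := by decide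
    exact hthird p q (ht.ne_iff.1 hab)
  · refine card_eq_zero.2 (filter_eq_empty_iff.2 fun m _ hm => h ?_)
    exact ⟨image_subset_image (erase_subset m univ) hm.1,
      image_subset_image (erase_subset m univ) hm.2⟩

section EvenDesign

variable {R : Type} [CommRing R] [Fintype R] [DecidableEq R]

-- `none` is the new point `∞`; block `(.inr m, i)` is `{i, i + 1, i + 2}` with its term at
-- position `m` replaced by `∞`.
def optionBlock : ((univ \ {0, 1} : Finset R) ⊕ Fin 3) → R → Finset (Option R)
  | .inl d, i => (ap 3 (d : R) i).map Function.Embedding.some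
  | .inr m, i => insertNone ((univ.erase m).image (apTerm 1 i))

theorem ne_zero_of_mem_univ_sdiff {d : R} (hd : d ∈ (univ \ {0, 1} : Finset R)) : d ≠ 0 :=
  fun h => (mem_sdiff.1 hd).2 (by simp [h])

variable [Nontrivial R]

theorem card_optionBlock (h2 : IsUnit (2 : R)) (j : (univ \ {0, 1} : Finset R) ⊕ Fin 3)
    (i : R) : #(optionBlock j i) = 3 := by
  have hR := isUnit_natCast_of_lt_three h2
  obtain d | m := j <;> simp only [optionBlock]
  · rw [card_map, card_ap hR (ne_zero_of_mem_univ_sdiff d.2)]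
  · rw [card_insertNone, card_image_apTerm hR one_ne_zero, card_erase_of_mem (mem_univ m),
      card_univ, Fintype.card_fin]

theorem card_filter_mem_image_erase_apTerm_one (h2 : IsUnit (2 : R)) (m : Fin 3) (a : R) :
    #{i | a ∈ (univ.erase m).image (apTerm 1 i)} = 2 := by
  rw [card_filter_mem_image_apTerm (isUnit_natCast_of_lt_three h2) one_ne_zero,
    card_erase_of_mem (mem_univ m), card_univ, Fintype.card_fin]

theorem sum_card_filter_pair_mem_image_erase_apTerm_one (h2 : IsUnit (2 : R)) {a b : R}
    (hab : a ≠ b) :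
    ∑ m : Fin 3, #{i | a ∈ (univ.erase m).image (apTerm 1 i) ∧
      b ∈ (univ.erase m).image (apTerm 1 i)} = #{i | a ∈ ap 3 1 i ∧ b ∈ ap 3 1 i} := by
  simp only [card_filter]
  rw [sum_comm]
  refine sum_congr rfl fun i _ => ?_
  rw [← card_filter, card_filter_pair_mem_image_erase
    (apTerm_injective (isUnit_natCast_of_lt_three h2) one_ne_zero i) hab]
  rfl

theorem card_filter_pair_mem_optionBlock (h2 : IsUnit (2 : R)) {x y : Option R} (hxy : x ≠ y) :
    #{p : ((univ \ {0, 1} : Finset R) ⊕ Fin 3) × R |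
      x ∈ optionBlock p.1 p.2 ∧ y ∈ optionBlock p.1 p.2} = 6 := by
  rw [card_filter_prod (fun j i => x ∈ optionBlock j i ∧ y ∈ optionBlock j i),
    Fintype.sum_sum_type]
  obtain _ | a := x <;> obtain _ | b := y <;> simp only [optionBlock, mem_map,
    Function.Embedding.some_apply, Option.some.injEq, exists_eq_right, reduceCtorEq, and_false,
    exists_const, false_and, filter_false, card_empty, sum_const_zero, zero_add,
    some_mem_insertNone, none_mem_insertNone, true_and, and_true]
  · exact absurd rfl hxy
  · simp only [card_filter_mem_image_erase_apTerm_one h2, sum_const, card_univ, Fintype.card_fin,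
      smul_eq_mul]
  · simp only [card_filter_mem_image_erase_apTerm_one h2, sum_const, card_univ, Fintype.card_fin,
      smul_eq_mul]
  · have hab : a ≠ b := fun h => hxy (congrArg some h)
    set c : R → ℕ := fun d => #{i | a ∈ ap 3 d i ∧ b ∈ ap 3 d i}
    have hsplit := sum_sdiff (f := c) (subset_univ {0, 1})
    rw [sum_pair zero_ne_one, show c 0 = 0 from card_filter_pair_mem_ap_zero hab,
      zero_add] at hsplit
    rw [sum_card_filter_pair_mem_image_erase_apTerm_one h2 hab, sum_coe_sort (univ \ {0, 1}) c,
      hsplit, ← card_filter_prod, card_filter_pair_mem_ap (isUnit_natCast_of_lt_three h2) hab]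

theorem sum_filter_mem_optionBlock (h2 : IsUnit (2 : R)) {w₁ : (univ \ {0, 1} : Finset R) → ℤ}
    {w₂ : Fin 3 → ℤ} (hsum₁ : ∑ d, w₁ d = 0) (hsum₂ : ∑ m, w₂ m = 0) (x : Option R) :
    ∑ p : _ × R with x ∈ optionBlock p.1 p.2, Sum.elim w₁ w₂ p.1 = 0 := by
  rw [sum_filter_prod_fst optionBlock _ x, Fintype.sum_sum_type]
  cases x with
  | none =>
    simp only [optionBlock, mem_map, Function.Embedding.some_apply, reduceCtorEq, and_false,
      exists_const, filter_false, card_empty, Nat.cast_zero, zero_mul, sum_const_zero,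
      none_mem_insertNone, filter_true, card_univ, Sum.elim_inr, ← mul_sum, hsum₂, mul_zero,
      zero_add]
  | some a =>
    simp only [optionBlock, mem_map, Function.Embedding.some_apply, Option.some.injEq,
      exists_eq_right, some_mem_insertNone, card_filter_mem_image_erase_apTerm_one h2,
      card_filter_mem_ap (isUnit_natCast_of_lt_three h2)
        (ne_zero_of_mem_univ_sdiff (Subtype.prop _)),
      Nat.cast_ofNat, Sum.elim_inl, Sum.elim_inr, ← mul_sum, hsum₁, hsum₂, mul_zero, add_zero]

end EvenDesign

theorem hasZeroSumFlowTS_option {R : Type} [CommRing R] [Fintype R] [DecidableEq R]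
    (h2 : IsUnit (2 : R)) (h3 : (3 : R) ≠ 0) : HasZeroSumFlowTS (Option R) 6 := by
  have : Nontrivial R := ⟨0, 1, fun h => h3 (by linear_combination -3 * h)⟩
  have hJ : 2 ≤ Fintype.card (univ \ {0, 1} : Finset R) := by
    rw [Fintype.card_coe]
    refine one_lt_card.2 ⟨2, ?_, -1, ?_, fun h => h3 (by linear_combination h)⟩ <;>
      simp only [mem_sdiff, mem_univ, mem_insert, mem_singleton, true_and, not_or]
    · exact ⟨h2.ne_zero, fun h => one_ne_zero (by linear_combination h)⟩
    · exact ⟨neg_ne_zero.2 one_ne_zero, fun h => h2.ne_zero (by linear_combination -h)⟩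
  obtain ⟨w₁, hw₁, hsum₁⟩ := exists_zero_sum_weights hJ
  obtain ⟨w₂, hw₂, hsum₂⟩ := exists_zero_sum_weights (J := Fin 3) (by simp)
  exact ⟨_ × R, inferInstance, fun p => optionBlock p.1 p.2, fun p => Sum.elim w₁ w₂ p.1,
    ⟨fun p => card_optionBlock h2 p.1 p.2, fun _ _ => card_filter_pair_mem_optionBlock h2⟩,
    fun p => (Sum.forall (p := fun j => Sum.elim w₁ w₂ j ≠ 0 ∧ |Sum.elim w₁ w₂ j| ≤ 2)).2
      ⟨hw₁, hw₂⟩ p.1, sum_filter_mem_optionBlock h2 hsum₁ hsum₂⟩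

theorem hasZeroSumFlowTS_fin_four : HasZeroSumFlowTS (Fin 4) 6 :=
  ⟨Fin 3 × Fin 4, inferInstance, fun p => {p.2}ᶜ, fun p => ![2, -1, -1] p.1,
    by unfold IsTripleSystem; decide, by unfold IsZeroSumFlow; decide⟩

theorem isUnit_two_zmod {n : ℕ} (hn : Odd n) : IsUnit (2 : ZMod n) := by
  exact_mod_cast (ZMod.isUnit_iff_coprime 2 n).2 (Nat.coprime_two_left.2 hn)

theorem hasZeroSumFlowTS_fin {v : ℕ} (hv : 3 ≤ v) : HasZeroSumFlowTS (Fin v) 6 := by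
  rcases Nat.even_or_odd v with hev | hodd
  · obtain rfl | h4 := eq_or_ne v 4
    · exact hasZeroSumFlowTS_fin_four
    obtain ⟨u, rfl⟩ : ∃ u, v = u + 1 := ⟨v - 1, by omega⟩
    have hu : Odd u := Nat.not_even_iff_odd.1 (Nat.even_add_one.1 hev)
    have : NeZero u := ⟨by omega⟩
    have h3 : (3 : ZMod u) ≠ 0 := fun h => by
      have := Nat.le_of_dvd three_pos ((ZMod.natCast_eq_zero_iff 3 u).1 (by exact_mod_cast h))
      have := Nat.odd_iff.1 hu
      omega
    exact (hasZeroSumFlowTS_option (isUnit_two_zmod hu) h3).congr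
      (Fintype.equivFinOfCardEq (by rw [Fintype.card_option, ZMod.card]))
  · have : Fact (1 < v) := ⟨by omega⟩
    exact (hasZeroSumFlowTS_of_isUnit_two (isUnit_two_zmod hodd)).congr
      (Fintype.equivFinOfCardEq (ZMod.card v))

/-- For every λ ≡ 0 (mod 6) and every v ≥ 3 there exists a
2-(v,3,λ) triple system admitting a zero-sum 3-flow. -/
theorem stmt19 (lam v : ℕ) (h6 : 6 ∣ lam) (hv : 3 ≤ v) :
    ∃ (b : ℕ) (B : Fin b → Finset (Fin v)),
      (∀ i, (B i).card = 3) ∧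
      (∀ x y : Fin v, x ≠ y →
        (Finset.univ.filter (fun i => x ∈ B i ∧ y ∈ B i)).card = lam) ∧
      ∃ f : Fin b → ℤ, (∀ i, f i ≠ 0 ∧ |f i| ≤ 2) ∧
        ∀ x : Fin v, ∑ i ∈ Finset.univ.filter (fun i => x ∈ B i), f i = 0 := by
  obtain ⟨k, rfl⟩ := h6
  obtain ⟨b, B, ⟨hcard, hpair⟩, f, hf, hflow⟩ := ((hasZeroSumFlowTS_fin hv).mul k).exists_fin
  exact ⟨b, B, hcard, hpair, f, hf, hflow⟩
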